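/- Let S be a finite block group all of whose subgroups are nilpotent. Then S is Mal'cev nilpotent if and only if S satisfies Property P₂: whenever y₁ and y₂ lie in the same J-class J of S and there exist z₁, z₂ ∈ S such that all four products y₁z₁y₂, y₁z₂y₁, y₂z₁y₁ and y₂z₂y₂ lie in J, the elements y₁ and y₂ are H-equivalent. -/

import Mathlib

/-!
Write `λₙ, ρₙ` for the Mal'cev sequences. In a finite monoid, `x J xy` forces `x R xy`
and `y J xy` forces `y L xy` (stability). Hence, as long as `λₙ` and `ρₙ` stay in one
`J`-class, `λₙ₊₁` is `R`-related to `λₙ` and `L`-related to `ρₙ`, and symmetrically.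

If `S` is Mal'cev nilpotent, start from `y₁, y₂` with `z₁, z₂` alternating: the premises
of `P₂` keep both sequences in the `J`-class of `y₁`, with `R`-classes those of `y₁, y₂`
and `L`-classes swapping at each step, so `λₙ = ρₙ` gives `y₁ H y₂`.

Conversely, if `S` is not Mal'cev nilpotent, pigeonholing a long counterexample yields
periodic sequences with `λₙ ≠ ρₙ` for all `n`; periodicity keeps them in one `J`-class.
Their first steps satisfy the premises of `P₂` with `z₁, z₂ ∈ S¹`; in a block group (at
most one idempotent per `R`- or `L`-class) this reduces to `z₁, z₂ ∈ S`, so `λ₀ H ρ₀`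
and the sequences live in one `H`-class. Left translation moves them into a maximal subgroup,
where nilpotency of class `c` puts `λₙ ρₙ⁻¹` in the `n`-th term of the lower central
series and forces `λ_c = ρ_c`.
-/

namespace SMN

variable {S : Type*}

/-- Mal'cev sequences `(λ_n, ρ_n)`; `z k` plays the role of `z_{k+1}`. -/
def lr [Mul S] (x y : S) (z : ℕ → S) : ℕ → S × S
  | 0 => (x, y)
  | n + 1 =>
    let p := lr x y z n
    (p.1 * z n * p.2, p.2 * z n * p.1)

/-- Cyclic shift by `k` in `Fin t`. -/
def cyc {t : ℕ} (i : Fin t) (k : ℕ) : Fin t :=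
  ⟨(i.val + k) % t, Nat.mod_lt _ i.pos⟩

/-- Strong Mal'cev sequences `λ_{n,i}`; `z k` plays the role of `z_{k+1}`. -/
def slam [Mul S] {t : ℕ} (x : Fin t → S) (z : ℕ → S) : ℕ → Fin t → S
  | 0 => x
  | n + 1 =>
    let f := slam x z n
    fun i => (List.range (t - 1)).foldl (fun acc j => acc * z n * f (cyc i (j + 1))) (f i)

/-- A semigroup is Mal'cev nilpotent if for some `n ≥ 1`,
`λ_n = ρ_n` for all `x, y ∈ S` and `z₁, …, z_n ∈ S¹`. -/
def MalcevNilpotent (S : Type*) [Semigroup S] : Prop :=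
  ∃ n : ℕ, 1 ≤ n ∧ ∀ (x y : S) (z : ℕ → WithOne S),
    (lr (x : WithOne S) (y : WithOne S) z n).1 = (lr (x : WithOne S) (y : WithOne S) z n).2

/-- Strong Mal'cev nilpotency at level `n`. -/
def SMNAt (S : Type*) [Semigroup S] (n : ℕ) : Prop :=
  ∀ t : ℕ, 2 ≤ t → ∀ (x : Fin t → S) (z : ℕ → WithOne S) (i j : Fin t),
    slam (fun k => (x k : WithOne S)) z n i = slam (fun k => (x k : WithOne S)) z n j

/-- A semigroup is strongly Mal'cev nilpotent if for some `n ≥ 1`, for every `t ≥ 2`,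
`λ_{n,1} = ⋯ = λ_{n,t}` for all `x₁, …, x_t ∈ S` and `z₁, …, z_n ∈ S¹`. -/
def StronglyMalcevNilpotent (S : Type*) [Semigroup S] : Prop :=
  ∃ n : ℕ, 1 ≤ n ∧ SMNAt S n

/-- `y` is an inverse of `x`. -/
def IsInverseOf [Semigroup S] (y x : S) : Prop := x * y * x = x ∧ y * x * y = y

/-- A block group: every element has at most one inverse. -/
def BlockGroup (S : Type*) [Semigroup S] : Prop :=
  ∀ x y₁ y₂ : S, IsInverseOf y₁ x → IsInverseOf y₂ x → y₁ = y₂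

/-- All subgroups (subsemigroups which are groups) of `S` are nilpotent. -/
def AllSubgroupsNilpotent (S : Type*) [Semigroup S] : Prop :=
  ∀ (G : Type) [Group G], ∀ φ : G → S,
    (∀ a b : G, φ (a * b) = φ a * φ b) → Function.Injective φ → Group.IsNilpotent G

/-- All subgroups (subsemigroups which are groups) of `S` are trivial. -/
def AllSubgroupsTrivial (S : Type*) [Semigroup S] : Prop :=
  ∀ (G : Type) [Group G], ∀ φ : G → S,
    (∀ a b : G, φ (a * b) = φ a * φ b) → Function.Injective φ → ∀ g : G, g = 1

end SMN

namespace SMN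

/-- Green's relation `R`: `x R y` iff `xS¹ = yS¹`. -/
def RRel {S : Type*} [Semigroup S] (x y : S) : Prop :=
  (∃ u : WithOne S, (x : WithOne S) * u = (y : WithOne S)) ∧
  (∃ u : WithOne S, (y : WithOne S) * u = (x : WithOne S))

/-- Green's relation `L`: `x L y` iff `S¹x = S¹y`. -/
def LRel {S : Type*} [Semigroup S] (x y : S) : Prop :=
  (∃ u : WithOne S, u * (x : WithOne S) = (y : WithOne S)) ∧
  (∃ u : WithOne S, u * (y : WithOne S) = (x : WithOne S))

/-- Green's relation `J`: `x J y` iff `S¹xS¹ = S¹yS¹`. -/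
def JRel {S : Type*} [Semigroup S] (x y : S) : Prop :=
  (∃ u v : WithOne S, u * (x : WithOne S) * v = (y : WithOne S)) ∧
  (∃ u v : WithOne S, u * (y : WithOne S) * v = (x : WithOne S))

/-- Green's relation `H = R ∩ L`. -/
def HRel {S : Type*} [Semigroup S] (x y : S) : Prop := RRel x y ∧ LRel x y

/-- `X` is an `R`-class of `S`. -/
def IsRClass {S : Type*} [Semigroup S] (X : Set S) : Prop :=
  ∃ x₀ : S, X = {y : S | RRel y x₀}

/-- An element `x` of a semigroup is regular. -/
def IsRegularElem {S : Type*} [Semigroup S] (x : S) : Prop := ∃ y : S, x * y * x = x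

/-- `X` is a regular `R`-class of `S`. -/
def IsRegularRClass {S : Type*} [Semigroup S] (X : Set S) : Prop :=
  IsRClass X ∧ ∃ x ∈ X, IsRegularElem x


/-- Property `P₂`: whenever `y₁, y₂` lie in the same `J`-class `J` and there are
`z₁, z₂ ∈ S` with `y₁z₁y₂, y₁z₂y₁, y₂z₁y₁, y₂z₂y₂ ∈ J`, the elements `y₁` and `y₂` are
`H`-equivalent. -/
def PropertyP2 (S : Type*) [Semigroup S] : Prop :=
  ∀ y₁ y₂ z₁ z₂ : S, JRel y₁ y₂ →
    JRel (y₁ * z₁ * y₂) y₁ → JRel (y₁ * z₂ * y₁) y₁ →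
    JRel (y₂ * z₁ * y₁) y₁ → JRel (y₂ * z₂ * y₂) y₁ →
    HRel y₁ y₂

section Green

variable {M : Type*} [Monoid M] {a b c d e f g s t x y z : M}

-- On `WithOne S`, `JEquiv`, `REquiv`, `LEquiv`, `HEquiv` of coerced elements unfold to
-- `JRel`, `RRel`, `LRel`, `HRel`.

def JLe (x y : M) : Prop := ∃ u v : M, u * y * v = x

def JEquiv (x y : M) : Prop := JLe y x ∧ JLe x y

def REquiv (x y : M) : Prop := (∃ u, x * u = y) ∧ ∃ u, y * u = x

def LEquiv (x y : M) : Prop := (∃ u, u * x = y) ∧ ∃ u, u * y = x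

def HEquiv (x y : M) : Prop := REquiv x y ∧ LEquiv x y

theorem JLe.refl (x : M) : JLe x x := ⟨1, 1, by simp⟩

theorem JLe.trans (hxy : JLe x y) (hyz : JLe y z) : JLe x z := by
  obtain ⟨u, v, rfl⟩ := hxy
  obtain ⟨u', v', rfl⟩ := hyz
  exact ⟨u * u', v' * v, by simp only [mul_assoc]⟩

theorem jLe_mul_right (x y : M) : JLe (x * y) x := ⟨1, y, by simp⟩

theorem jLe_mul_left (x y : M) : JLe (x * y) y := ⟨x, 1, by simp⟩

theorem JEquiv.refl (x : M) : JEquiv x x := ⟨.refl x, .refl x⟩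

theorem JEquiv.symm (h : JEquiv x y) : JEquiv y x := ⟨h.2, h.1⟩

theorem JEquiv.trans (hxy : JEquiv x y) (hyz : JEquiv y z) : JEquiv x z :=
  ⟨hyz.1.trans hxy.1, hxy.2.trans hyz.2⟩

theorem jEquiv_of_jLe (hxy : JLe x y) (hyz : JLe y z) (hzx : JLe z x) : JEquiv x y :=
  ⟨hyz.trans hzx, hxy⟩

theorem REquiv.refl (x : M) : REquiv x x := ⟨⟨1, mul_one x⟩, 1, mul_one x⟩

theorem REquiv.symm (h : REquiv x y) : REquiv y x := ⟨h.2, h.1⟩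

theorem REquiv.trans (hxy : REquiv x y) (hyz : REquiv y z) : REquiv x z := by
  obtain ⟨⟨u, rfl⟩, u', hu'⟩ := hxy
  obtain ⟨⟨v, rfl⟩, v', hv'⟩ := hyz
  exact ⟨⟨u * v, by rw [mul_assoc]⟩, v' * u', by rw [← mul_assoc, hv', hu']⟩

theorem REquiv.jEquiv (h : REquiv x y) : JEquiv x y := by
  obtain ⟨⟨u, rfl⟩, u', hu'⟩ := h
  exact ⟨⟨1, u, by simp⟩, 1, u', by simpa using hu'⟩

theorem LEquiv.refl (x : M) : LEquiv x x := ⟨⟨1, one_mul x⟩, 1, one_mul x⟩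

theorem LEquiv.symm (h : LEquiv x y) : LEquiv y x := ⟨h.2, h.1⟩

theorem LEquiv.trans (hxy : LEquiv x y) (hyz : LEquiv y z) : LEquiv x z := by
  obtain ⟨⟨u, rfl⟩, u', hu'⟩ := hxy
  obtain ⟨⟨v, rfl⟩, v', hv'⟩ := hyz
  exact ⟨⟨v * u, by rw [mul_assoc]⟩, u' * v', by rw [mul_assoc, hv', hu']⟩

theorem HEquiv.refl (x : M) : HEquiv x x := ⟨.refl x, .refl x⟩

theorem HEquiv.symm (h : HEquiv x y) : HEquiv y x := ⟨h.1.symm, h.2.symm⟩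

theorem HEquiv.idem_mul (hg : IsIdempotentElem g) (hx : HEquiv x g) : g * x = x := by
  obtain ⟨⟨-, s, rfl⟩, -⟩ := hx
  rw [← mul_assoc, hg.eq]

theorem HEquiv.mul_idem (hg : IsIdempotentElem g) (hx : HEquiv x g) : x * g = x := by
  obtain ⟨-, -, t, rfl⟩ := hx
  rw [mul_assoc, hg.eq]

theorem hEquiv_mul_left {p q v : M} (hp : p * g = a) (hq : q * a = g) (hv : HEquiv v a) :
    HEquiv (q * v) g ∧ p * (q * v) = v := by
  obtain ⟨⟨⟨u, hu⟩, s, rfl⟩, hvL⟩ := hv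
  have hpq : p * (q * (a * s)) = a * s := by rw [← mul_assoc q, hq, ← mul_assoc, hp]
  refine ⟨⟨⟨⟨u, by rw [mul_assoc, hu, hq]⟩, s, by rw [← mul_assoc, hq]⟩, ?_⟩, hpq⟩
  exact (LEquiv.trans ⟨⟨p, hpq⟩, q, rfl⟩ hvL).trans ⟨⟨q, hq⟩, p, hp⟩

theorem jEquiv_mul_mul_of_lEquiv_of_rEquiv (hx : LEquiv x c) (hy : REquiv y d) :
    JEquiv (x * z * y) (c * z * d) := by
  obtain ⟨⟨u, rfl⟩, u', hu'⟩ := hx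
  obtain ⟨⟨v, rfl⟩, v', hv'⟩ := hy
  refine ⟨⟨u, v, by simp only [mul_assoc]⟩, u', v', ?_⟩
  calc u' * (u * x * z * (y * v)) * v' = u' * (u * x) * z * (y * v * v') := by
        simp only [mul_assoc]
    _ = x * z * y := by rw [hu', hv']

theorem BlockGroup.eq_of_rEquiv (h : BlockGroup M) (he : IsIdempotentElem e)
    (hf : IsIdempotentElem f) (hef : REquiv e f) : e = f := by
  obtain ⟨⟨u, hu⟩, v, hv⟩ := hef
  have hef : e * f = f := by rw [← hu, ← mul_assoc, he.eq]
  have hfe : f * e = e := by rw [← hv, ← mul_assoc, hf.eq]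
  have hff : f * f * f = f := by rw [hf.eq, hf.eq]
  exact h f e f ⟨by rw [hfe, hef], by rw [hef, hfe]⟩ ⟨hff, hff⟩

theorem BlockGroup.eq_of_lEquiv (h : BlockGroup M) (he : IsIdempotentElem e)
    (hf : IsIdempotentElem f) (hef : LEquiv e f) : e = f := by
  obtain ⟨⟨u, hu⟩, v, hv⟩ := hef
  have hfe : f * e = f := by rw [← hu, mul_assoc, he.eq]
  have hef : e * f = e := by rw [← hv, mul_assoc, hf.eq]
  have hff : f * f * f = f := by rw [hf.eq, hf.eq]
  exact h f e f ⟨by rw [hfe, hf.eq], by rw [hef, he.eq]⟩ ⟨hff, hff⟩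

theorem pow_mul_mul_pow_eq (h : s * x * t = x) (n : ℕ) : s ^ n * x * t ^ n = x := by
  induction n with
  | zero => simp
  | succ n ih =>
    calc s ^ (n + 1) * x * t ^ (n + 1) = s ^ n * (s * x * t) * t ^ n := by
          rw [pow_succ, pow_succ']; simp only [mul_assoc]
      _ = x := by rw [h, ih]

section Finite

variable [Finite M]

theorem exists_isIdempotentElem_pow (c : M) : ∃ n, 0 < n ∧ IsIdempotentElem (c ^ n) := by
  obtain ⟨i, j, hne, hij⟩ := Finite.exists_ne_map_eq_of_infinite (c ^ · : ℕ → M)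
  wlog hlt : i < j generalizing i j
  · exact this j i hne.symm hij.symm (by omega)
  obtain ⟨p, rfl⟩ : ∃ p, j = i + (p + 1) := ⟨j - i - 1, by omega⟩
  have hper : ∀ t, c ^ (i + t * (p + 1)) = c ^ i := by
    intro t
    induction t with
    | zero => simp
    | succ t ih => rw [add_mul, one_mul, ← add_assoc, pow_add, ih, ← pow_add]; exact hij.symm
  -- `c ^ n` is idempotent for the multiple `n = (i + 1) * (p + 1)` of the period beyond `i`
  refine ⟨i + (i * p + p + 1), by omega, ?_⟩
  calc c ^ (i + (i * p + p + 1)) * c ^ (i + (i * p + p + 1))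
      = c ^ (i * p + p + 1) * c ^ (i + (i + 1) * (p + 1)) := by
        rw [← pow_add, ← pow_add]; congr 1; ring
    _ = c ^ (i + (i * p + p + 1)) := by rw [hper, ← pow_add, add_comm]

theorem exists_mul_eq_of_jLe_mul_right (h : JLe x (x * t)) : ∃ s, x * t * s = x := by
  obtain ⟨u, v, huv⟩ := h
  -- `x = uⁿ x (t v)ⁿ` for every `n`, and some `(t v)ⁿ` is idempotent
  obtain ⟨n, hn, hidem⟩ := exists_isIdempotentElem_pow (t * v)
  obtain ⟨n, rfl⟩ := Nat.exists_eq_add_one_of_ne_zero hn.ne'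
  have hx := pow_mul_mul_pow_eq
    (show u * x * (t * v) = x by simpa only [mul_assoc] using huv) (n + 1)
  refine ⟨v * (t * v) ^ n, ?_⟩
  calc x * t * (v * (t * v) ^ n) = u ^ (n + 1) * x * (t * v) ^ (n + 1) * (t * v) ^ (n + 1) := by
        rw [hx, pow_succ']; simp only [mul_assoc]
    _ = x := by rw [mul_assoc _ ((t * v) ^ (n + 1)), hidem.eq, hx]

theorem exists_mul_eq_of_jLe_mul_left (h : JLe x (t * x)) : ∃ s, s * (t * x) = x := by
  obtain ⟨u, v, huv⟩ := h
  obtain ⟨n, hn, hidem⟩ := exists_isIdempotentElem_pow (u * t)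
  obtain ⟨n, rfl⟩ := Nat.exists_eq_add_one_of_ne_zero hn.ne'
  have hx := pow_mul_mul_pow_eq
    (show u * t * x * v = x by simpa only [mul_assoc] using huv) (n + 1)
  refine ⟨(u * t) ^ n * u, ?_⟩
  calc (u * t) ^ n * u * (t * x) = (u * t) ^ (n + 1) * ((u * t) ^ (n + 1) * x * v ^ (n + 1)) := by
        rw [hx, pow_succ]; simp only [mul_assoc]
    _ = x := by rw [← mul_assoc, ← mul_assoc, hidem.eq, hx]

theorem rEquiv_mul_right_of_jEquiv (h : JEquiv (x * t) x) : REquiv (x * t) x :=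
  ⟨exists_mul_eq_of_jLe_mul_right h.1, t, rfl⟩

theorem lEquiv_mul_left_of_jEquiv (h : JEquiv (t * x) x) : LEquiv (t * x) x :=
  ⟨exists_mul_eq_of_jLe_mul_left h.1, t, rfl⟩

theorem rEquiv_mul_mul_of_jEquiv (h : JEquiv (x * z * y) x) : REquiv (x * z * y) x := by
  rw [mul_assoc] at h ⊢
  exact rEquiv_mul_right_of_jEquiv h

theorem lEquiv_mul_mul_of_jEquiv (h : JEquiv (x * z * y) y) : LEquiv (x * z * y) y :=
  lEquiv_mul_left_of_jEquiv h

/-- The Miller–Clifford theorem, one direction. -/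
theorem exists_isIdempotentElem_of_jEquiv_mul (hx : JEquiv (x * y) x) (hy : JEquiv (x * y) y) :
    ∃ e, IsIdempotentElem e ∧ LEquiv e x ∧ REquiv e y := by
  obtain ⟨s, hs⟩ := exists_mul_eq_of_jLe_mul_right hx.1
  obtain ⟨n, hn, he⟩ := exists_isIdempotentElem_pow (y * s)
  obtain ⟨n, rfl⟩ := Nat.exists_eq_add_one_of_ne_zero hn.ne'
  have hxe : x * (y * s) ^ (n + 1) = x := by
    simpa using pow_mul_mul_pow_eq (s := 1) (x := x) (t := y * s)
      (by rw [one_mul, ← mul_assoc, hs]) (n + 1)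
  have hye : y * (s * (y * s) ^ n) = (y * s) ^ (n + 1) := by rw [pow_succ', mul_assoc]
  have hxy : JEquiv x y := hx.symm.trans hy
  have hey : JEquiv ((y * s) ^ (n + 1)) y :=
    jEquiv_of_jLe (hye ▸ jLe_mul_right _ _) hxy.1 (hxe ▸ jLe_mul_left _ _)
  refine ⟨_, he, ?_, ?_⟩
  · have := lEquiv_mul_left_of_jEquiv (t := x) (x := (y * s) ^ (n + 1))
      (by rw [hxe]; exact hxy.trans hey.symm)
    rw [hxe] at this
    exact this.symm
  · have := rEquiv_mul_right_of_jEquiv (x := y) (t := s * (y * s) ^ n) (by rw [hye]; exact hey)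
    rwa [hye] at this

theorem BlockGroup.lEquiv_of_jEquiv (h : BlockGroup M) (hxzy : JEquiv (x * z * y) a)
    (hx : JEquiv x a) (hy : JEquiv y a) (he : IsIdempotentElem e) (hey : REquiv e y) :
    LEquiv (x * z) e := by
  obtain ⟨f, hf, hfx, hfy⟩ := exists_isIdempotentElem_of_jEquiv_mul
    (jEquiv_of_jLe (jLe_mul_right _ _) ((jLe_mul_right x z).trans hx.2) hxzy.1)
    (jEquiv_of_jLe (jLe_mul_left _ _) hy.2 hxzy.1)
  rw [← h.eq_of_rEquiv hf he (hfy.trans hey.symm)]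
  exact hfx.symm

theorem BlockGroup.rEquiv_of_jEquiv (h : BlockGroup M) (hxzy : JEquiv (x * z * y) a)
    (hx : JEquiv x a) (hy : JEquiv y a) (he : IsIdempotentElem e) (hex : LEquiv e x) :
    REquiv (z * y) e := by
  rw [mul_assoc] at hxzy
  obtain ⟨f, hf, hfx, hfy⟩ := exists_isIdempotentElem_of_jEquiv_mul
    (jEquiv_of_jLe (jLe_mul_right _ _) hx.2 hxzy.1)
    (jEquiv_of_jLe (jLe_mul_left _ _) ((jLe_mul_left z y).trans hy.2) hxzy.1)
  rw [← h.eq_of_lEquiv hf he (hfx.trans hex.symm)]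
  exact hfy.symm

/-- The premises of property `P₂` for `y₁ = a`, `y₂ = b`, `z₁ = u`, `z₂ = v`. -/
def P2Premise (a b u v : M) : Prop :=
  JEquiv a b ∧ JEquiv (a * u * b) a ∧ JEquiv (a * v * a) a ∧ JEquiv (b * u * a) a ∧
    JEquiv (b * v * b) a

theorem P2Premise.sq_right (hbg : BlockGroup M) {u : M} (h : P2Premise a b u 1) :
    P2Premise a b u (u * u) := by
  obtain ⟨hab, h₁, h₂, h₃, h₄⟩ := h
  have ha := JEquiv.refl a
  have hb := hab.symm
  obtain ⟨ea, hea, heaL, heaR⟩ := exists_isIdempotentElem_of_jEquiv_mul (x := a) (y := a)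
    (by simpa using h₂) (by simpa using h₂)
  obtain ⟨eb, heb, hebL, hebR⟩ := exists_isIdempotentElem_of_jEquiv_mul (x := b) (y := b)
    (by simpa using h₄.trans hab) (by simpa using h₄.trans hab)
  have hauL : LEquiv (a * u) b := (hbg.lEquiv_of_jEquiv h₁ ha hb heb hebR).trans hebL
  have hbuL : LEquiv (b * u) a := (hbg.lEquiv_of_jEquiv h₃ hb ha hea heaR).trans heaL
  refine ⟨hab, h₁, ?_, h₃, ?_⟩
  · rw [← mul_assoc]
    exact (jEquiv_mul_mul_of_lEquiv_of_rEquiv hauL (.refl a)).trans h₃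
  · rw [← mul_assoc]
    exact (jEquiv_mul_mul_of_lEquiv_of_rEquiv hbuL (.refl b)).trans h₁

theorem P2Premise.sq_left (hbg : BlockGroup M) {v : M} (h : P2Premise a b 1 v) :
    P2Premise a b (v * v) v := by
  obtain ⟨hab, h₁, h₂, h₃, h₄⟩ := h
  have ha := JEquiv.refl a
  have hb := hab.symm
  obtain ⟨e, he, heL, heR⟩ := exists_isIdempotentElem_of_jEquiv_mul (x := a) (y := b)
    (by simpa using h₁) (by simpa using h₁.trans hab)
  obtain ⟨f, hf, hfL, hfR⟩ := exists_isIdempotentElem_of_jEquiv_mul (x := b) (y := a)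
    (by simpa using h₃.trans hab) (by simpa using h₃)
  have havL : LEquiv (a * v) b := (hbg.lEquiv_of_jEquiv h₂ ha ha hf hfR).trans hfL
  have hbvL : LEquiv (b * v) a := (hbg.lEquiv_of_jEquiv h₄ hb hb he heR).trans heL
  refine ⟨hab, ?_, h₂, ?_, h₄⟩
  · rw [← mul_assoc]
    exact (jEquiv_mul_mul_of_lEquiv_of_rEquiv havL (.refl b)).trans h₄
  · rw [← mul_assoc]
    exact (jEquiv_mul_mul_of_lEquiv_of_rEquiv hbvL (.refl a)).trans h₂

theorem P2Premise.hEquiv_of_one_one (hbg : BlockGroup M) (h : P2Premise a b 1 1) :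
    HEquiv a b := by
  obtain ⟨hab, h₁, h₂, -, h₄⟩ := h
  obtain ⟨ea, hea, heaL, heaR⟩ := exists_isIdempotentElem_of_jEquiv_mul (x := a) (y := a)
    (by simpa using h₂) (by simpa using h₂)
  obtain ⟨eb, heb, hebL, hebR⟩ := exists_isIdempotentElem_of_jEquiv_mul (x := b) (y := b)
    (by simpa using h₄.trans hab) (by simpa using h₄.trans hab)
  have hR := hbg.rEquiv_of_jEquiv h₁ (.refl a) hab.symm hea heaL
  have hL := hbg.lEquiv_of_jEquiv h₁ (.refl a) hab.symm heb hebR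
  rw [one_mul] at hR
  rw [mul_one] at hL
  exact ⟨heaR.symm.trans hR.symm, hL.trans hebL⟩

theorem rEquiv_and_lEquiv_mul_mul (hb : JEquiv b a) (hsR : REquiv s a) (htR : REquiv t b)
    (hsL : LEquiv s c) (htL : LEquiv t d) (hc : JEquiv (c * z * b) a)
    (hd : JEquiv (d * z * a) a) :
    REquiv (s * z * t) a ∧ REquiv (t * z * s) b ∧
      LEquiv (s * z * t) d ∧ LEquiv (t * z * s) c := by
  have hs : JEquiv s a := hsR.jEquiv
  have ht : JEquiv t a := htR.jEquiv.trans hb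
  have hszt := (jEquiv_mul_mul_of_lEquiv_of_rEquiv hsL htR).trans hc
  have htzs := (jEquiv_mul_mul_of_lEquiv_of_rEquiv htL hsR).trans hd
  exact ⟨(rEquiv_mul_mul_of_jEquiv (hszt.trans hs.symm)).trans hsR,
    (rEquiv_mul_mul_of_jEquiv (htzs.trans ht.symm)).trans htR,
    (lEquiv_mul_mul_of_jEquiv (hszt.trans ht.symm)).trans htL,
    (lEquiv_mul_mul_of_jEquiv (htzs.trans hs.symm)).trans hsL⟩

end Finite

end Green

def alternate {α : Type*} (x y : α) (k : ℕ) : α := if Even k then x else y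

theorem alternate_succ {α : Type*} (x y : α) (k : ℕ) :
    alternate x y (k + 1) = alternate y x k := by
  by_cases hk : Even k <;> simp [alternate, Nat.even_add_one, hk]

section MalcevSequence

variable {A : Type*} [Mul A] {x y : A} {w : ℕ → A}

theorem lr_succ (x y : A) (w : ℕ → A) (m : ℕ) :
    lr x y w (m + 1) =
      ((lr x y w m).1 * w m * (lr x y w m).2, (lr x y w m).2 * w m * (lr x y w m).1) :=
  rfl

theorem lr_add (x y : A) (w : ℕ → A) (i m : ℕ) :
    lr x y w (i + m) = lr (lr x y w i).1 (lr x y w i).2 (fun t => w (i + t)) m := by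
  induction m with
  | zero => rfl
  | succ m ih => rw [← add_assoc, lr_succ, lr_succ, ih]

theorem lr_congr {w' : ℕ → A} {m : ℕ} (h : ∀ t < m, w t = w' t) :
    lr x y w m = lr x y w' m := by
  induction m with
  | zero => rfl
  | succ m ih => rw [lr_succ, lr_succ, ih fun t ht => h t (by omega), h m (by omega)]

theorem lr_map {B : Type*} [Mul B] (f : A → B) {w' : ℕ → B}
    (hf : ∀ m, f (lr x y w (m + 1)).1 = f (lr x y w m).1 * w' m * f (lr x y w m).2 ∧
      f (lr x y w (m + 1)).2 = f (lr x y w m).2 * w' m * f (lr x y w m).1) :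
    ∀ m, lr (f x) (f y) w' m = (f (lr x y w m).1, f (lr x y w m).2)
  | 0 => rfl
  | m + 1 => by rw [lr_succ, lr_map f hf m, (hf m).1, (hf m).2]

theorem lr_eq_of_le {m n : ℕ} (h : (lr x y w m).1 = (lr x y w m).2) (hmn : m ≤ n) :
    (lr x y w n).1 = (lr x y w n).2 := by
  induction n, hmn using Nat.le_induction with
  | base => exact h
  | succ n _ ih => simp only [lr_succ, ih]

theorem lr_add_period {k : ℕ} (hk : lr x y w k = (x, y)) (hw : ∀ t, w (t + k) = w t) (m : ℕ) :
    lr x y w (m + k) = lr x y w m := by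
  rw [add_comm m k, lr_add, hk]
  exact congrArg (lr x y · m) (funext fun t => by rw [add_comm, hw])

theorem lr_mul_period {k : ℕ} (hper : ∀ m, lr x y w (m + k) = lr x y w m) (t : ℕ) :
    lr x y w (t * k) = (x, y) := by
  induction t with
  | zero => rw [zero_mul]; rfl
  | succ t ih => rw [add_mul, one_mul, hper, ih]

theorem lr_ne_of_periodic {k : ℕ} (hk : 0 < k) (hper : ∀ m, lr x y w (m + k) = lr x y w m)
    (hxy : x ≠ y) (m : ℕ) : (lr x y w m).1 ≠ (lr x y w m).2 := fun h =>
  hxy (by simpa [lr_mul_period hper m] using lr_eq_of_le h (Nat.le_mul_of_pos_right m hk))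

end MalcevSequence

section MalcevSequenceMonoid

variable {M : Type*} [Monoid M] {a b : M} {w : ℕ → M}

theorem lr_fst_jLe (x y : M) (z : ℕ → M) (m d : ℕ) :
    JLe (lr x y z (m + d)).1 (lr x y z m).1 := by
  induction d with
  | zero => exact .refl _
  | succ d ih => exact ((jLe_mul_right _ _).trans (jLe_mul_right _ _)).trans ih

theorem lr_snd_jLe (x y : M) (z : ℕ → M) (m d : ℕ) :
    JLe (lr x y z (m + d)).2 (lr x y z m).2 := by
  induction d with
  | zero => exact .refl _
  | succ d ih => exact ((jLe_mul_right _ _).trans (jLe_mul_right _ _)).trans ih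

theorem lr_jEquiv_of_periodic {k : ℕ} (hk : 0 < k) (hper : ∀ m, lr a b w (m + k) = lr a b w m)
    (m : ℕ) : JEquiv (lr a b w m).1 a ∧ JEquiv (lr a b w m).2 a := by
  -- `(a, b)` recurs at the index `(n + 1) * k > n`, which lies below both entries at step `n`
  have hbelow : ∀ n, JLe a (lr a b w n).1 ∧ JLe a (lr a b w n).2 ∧ JLe b (lr a b w n).1 := by
    intro n
    obtain ⟨d, hd⟩ : ∃ d, (n + 1) * k = n + 1 + d :=
      ⟨(n + 1) * k - (n + 1), by have := Nat.le_mul_of_pos_right (n + 1) hk; omega⟩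
    have hrec := lr_mul_period hper (n + 1)
    rw [hd] at hrec
    have ha := lr_fst_jLe a b w (n + 1) d
    have hb := lr_snd_jLe a b w (n + 1) d
    rw [hrec] at ha hb
    exact ⟨ha.trans ((jLe_mul_right _ _).trans (jLe_mul_right _ _)), ha.trans (jLe_mul_left _ _),
      hb.trans (jLe_mul_left _ _)⟩
  have hfst := lr_fst_jLe a b w 0 m
  have hsnd := lr_snd_jLe a b w 0 m
  rw [zero_add] at hfst hsnd
  exact ⟨⟨(hbelow m).1, hfst⟩, ⟨(hbelow m).2.1, hsnd.trans (hbelow 0).2.2⟩⟩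

variable [Finite M]

theorem P2Premise.rEquiv_and_lEquiv_lr_alternate {z₁ z₂ : M} (h : P2Premise a b z₁ z₂)
    (m : ℕ) :
    REquiv (lr a b (alternate z₁ z₂) m).1 a ∧ REquiv (lr a b (alternate z₁ z₂) m).2 b ∧
      LEquiv (lr a b (alternate z₁ z₂) m).1 (alternate a b m) ∧
      LEquiv (lr a b (alternate z₁ z₂) m).2 (alternate b a m) := by
  obtain ⟨hab, h₁, h₂, h₃, h₄⟩ := h
  induction m with
  | zero => exact ⟨.refl a, .refl b, .refl a, .refl b⟩
  | succ m ih =>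
    obtain ⟨hsR, htR, hsL, htL⟩ := ih
    have hstep : JEquiv (alternate a b m * alternate z₁ z₂ m * b) a ∧
        JEquiv (alternate b a m * alternate z₁ z₂ m * a) a := by
      by_cases hm : Even m <;> simp only [alternate, hm, if_true, if_false] <;> tauto
    rw [alternate_succ a b, alternate_succ b a]
    exact rEquiv_and_lEquiv_mul_mul hab.symm hsR htR hsL htL hstep.1 hstep.2

theorem P2Premise.hEquiv_of_lr_eq {z₁ z₂ : M} (h : P2Premise a b z₁ z₂) {n : ℕ}
    (hn : (lr a b (alternate z₁ z₂) n).1 = (lr a b (alternate z₁ z₂) n).2) :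
    HEquiv a b := by
  obtain ⟨hsR, htR, hsL, htL⟩ := h.rEquiv_and_lEquiv_lr_alternate n
  rw [hn] at hsR hsL
  refine ⟨hsR.symm.trans htR, ?_⟩
  have := hsL.symm.trans htL
  unfold alternate at this
  split_ifs at this
  exacts [this, this.symm]

theorem P2Premise.of_lr (hJ : ∀ m, JEquiv (lr a b w m).1 a ∧ JEquiv (lr a b w m).2 a) :
    P2Premise a b (w 0) (w 1) := by
  have hab : JEquiv a b := (hJ 0).2.symm
  have h₁ : JEquiv (a * w 0 * b) a := (hJ 1).1
  have h₃ : JEquiv (b * w 0 * a) a := (hJ 1).2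
  have hsL : LEquiv (a * w 0 * b) b := lEquiv_mul_mul_of_jEquiv (h₁.trans hab)
  have hsR : REquiv (a * w 0 * b) a := rEquiv_mul_mul_of_jEquiv h₁
  have htL : LEquiv (b * w 0 * a) a := lEquiv_mul_mul_of_jEquiv h₃
  have htR : REquiv (b * w 0 * a) b := rEquiv_mul_mul_of_jEquiv (h₃.trans hab)
  exact ⟨hab, h₁, (jEquiv_mul_mul_of_lEquiv_of_rEquiv htL hsR).symm.trans (hJ 2).2, h₃,
    (jEquiv_mul_mul_of_lEquiv_of_rEquiv hsL htR).symm.trans (hJ 2).1⟩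

theorem lr_hEquiv (hJ : ∀ m, JEquiv (lr a b w m).1 a ∧ JEquiv (lr a b w m).2 a)
    (hab : HEquiv a b) (m : ℕ) : HEquiv (lr a b w m).1 a ∧ HEquiv (lr a b w m).2 a := by
  induction m with
  | zero => exact ⟨.refl a, hab.symm⟩
  | succ m ih =>
    obtain ⟨hs, ht⟩ := ih
    have hsJ := hs.1.jEquiv
    have htJ := ht.1.jEquiv
    exact ⟨⟨(rEquiv_mul_mul_of_jEquiv ((hJ (m + 1)).1.trans hsJ.symm)).trans hs.1,
        (lEquiv_mul_mul_of_jEquiv ((hJ (m + 1)).1.trans htJ.symm)).trans ht.2⟩,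
      ⟨(rEquiv_mul_mul_of_jEquiv ((hJ (m + 1)).2.trans htJ.symm)).trans ht.1,
        (lEquiv_mul_mul_of_jEquiv ((hJ (m + 1)).2.trans hsJ.symm)).trans hs.2⟩⟩

end MalcevSequenceMonoid

section WithOne

variable {S : Type*} [Semigroup S]

instance {α : Type*} [Finite α] : Finite (WithOne α) := inferInstanceAs (Finite (Option α))

theorem jRel_iff {x y : S} : JRel x y ↔ JEquiv (x : WithOne S) y := Iff.rfl

theorem p2Premise_coe_iff {a b u v : S} :
    P2Premise (a : WithOne S) b u v ↔
      JRel a b ∧ JRel (a * u * b) a ∧ JRel (a * v * a) a ∧ JRel (b * u * a) a ∧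
        JRel (b * v * b) a := by
  simp only [P2Premise, jRel_iff, WithOne.coe_mul]

theorem MalcevNilpotent.propertyP2 [Finite S] (h : MalcevNilpotent S) : PropertyP2 S := by
  obtain ⟨n, -, hn⟩ := h
  intro a b u v h₀ h₁ h₂ h₃ h₄
  exact (p2Premise_coe_iff.mpr ⟨h₀, h₁, h₂, h₃, h₄⟩).hEquiv_of_lr_eq (hn a b _)

theorem withOne_eq_one_of_mul_eq_one {x y : WithOne S} (h : x * y = 1) : x = 1 := by
  induction x using WithOne.recOneCoe with
  | one => rfl
  | coe a => induction y using WithOne.recOneCoe <;> simp [← WithOne.coe_mul] at h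

theorem BlockGroup.withOne (h : BlockGroup S) : BlockGroup (WithOne S) := by
  intro x y₁ y₂ h₁ h₂
  induction x using WithOne.recOneCoe with
  | one =>
    simp only [IsInverseOf, mul_one, one_mul] at h₁ h₂
    rw [h₁.1, h₂.1]
  | coe s =>
    have hne : ∀ {y : WithOne S}, IsInverseOf y s → y ≠ 1 := by
      rintro y ⟨-, hy⟩ rfl
      simp at hy
    obtain ⟨t₁, rfl⟩ := WithOne.ne_one_iff_exists.mp (hne h₁)
    obtain ⟨t₂, rfl⟩ := WithOne.ne_one_iff_exists.mp (hne h₂)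
    simp only [IsInverseOf, ← WithOne.coe_mul, WithOne.coe_inj] at h₁ h₂
    rw [h s t₁ t₂ h₁ h₂]

theorem AllSubgroupsNilpotent.withOne (h : AllSubgroupsNilpotent S) :
    AllSubgroupsNilpotent (WithOne S) := by
  intro G _ φ hφ hinj
  by_cases h1 : φ 1 = 1
  · have hone : ∀ g, φ g = 1 := fun g =>
      withOne_eq_one_of_mul_eq_one (by rw [← hφ, mul_inv_cancel, h1])
    have : Subsingleton G := ⟨fun g g' => hinj (by rw [hone, hone])⟩
    exact Group.isNilpotent_of_subsingleton
  · have hne : ∀ g, φ g ≠ 1 := fun g hg =>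
      h1 (by rw [← one_mul (φ 1), ← hg, ← hφ, mul_one])
    choose ψ hψ using fun g => WithOne.ne_one_iff_exists.mp (hne g)
    refine h G ψ (fun g g' => WithOne.coe_injective ?_) fun g g' hgg' => hinj ?_
    · rw [WithOne.coe_mul, hψ, hψ, hψ, hφ]
    · rw [← hψ, ← hψ, hgg']

theorem PropertyP2.hEquiv (hp : PropertyP2 S) {a b u v : S}
    (h : P2Premise (a : WithOne S) b u v) : HEquiv (a : WithOne S) b :=
  let ⟨h₀, h₁, h₂, h₃, h₄⟩ := p2Premise_coe_iff.mp h
  hp a b u v h₀ h₁ h₂ h₃ h₄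

theorem PropertyP2.hEquiv_withOne [Finite S] (hp : PropertyP2 S) (hbg : BlockGroup S)
    {a b : S} {u v : WithOne S} (h : P2Premise (a : WithOne S) b u v) :
    HEquiv (a : WithOne S) b := by
  induction u using WithOne.recOneCoe with
  | one =>
    induction v using WithOne.recOneCoe with
    | one => exact h.hEquiv_of_one_one hbg.withOne
    | coe v => exact hp.hEquiv (u := v * v) (by simpa using h.sq_left hbg.withOne)
  | coe u =>
    induction v using WithOne.recOneCoe with
    | one => exact hp.hEquiv (v := u * u) (by simpa using h.sq_right hbg.withOne)
    | coe v => exact hp.hEquiv h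

end WithOne

section Nilpotent

open scoped commutatorElement

theorem exists_lr_eq_of_isNilpotent {G : Type*} [Group G] (h : Group.IsNilpotent G) :
    ∃ c, ∀ (x y : G) (z : ℕ → G), (lr x y z c).1 = (lr x y z c).2 := by
  obtain ⟨c, hc⟩ := Subgroup.nilpotent_iff_lowerCentralSeries.mp h
  refine ⟨c, fun x y z => ?_⟩
  have key : ∀ n,
      (lr x y z n).1 * (lr x y z n).2⁻¹ ∈ (⊤ : Subgroup G).lowerCentralSeries n := by
    intro n
    induction n with
    | zero => exact Subgroup.mem_top _
    | succ n ih =>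
      have hcomm : (lr x y z (n + 1)).1 * (lr x y z (n + 1)).2⁻¹ =
          ⁅(lr x y z n).1 * (lr x y z n).2⁻¹, (lr x y z n).2 * z n⁆ := by
        simp only [lr_succ, commutatorElement_def]
        group
      rw [hcomm]
      exact Subgroup.commutator_mem_commutator ih (Subgroup.mem_top _)
  have := key c
  rwa [hc, Subgroup.mem_bot, mul_inv_eq_one] at this

theorem AllSubgroupsNilpotent.isNilpotent {M : Type*} [Semigroup M] (h : AllSubgroupsNilpotent M)
    {G : Type*} [Group G] [Finite G] (φ : G →ₙ* M) (hφ : Function.Injective φ) :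
    Group.IsNilpotent G := by
  have := h (Shrink.{0} G) (φ ∘ Shrink.mulEquiv) (fun g g' => by simp)
    (hφ.comp Shrink.mulEquiv.injective)
  exact Group.nilpotent_of_mulEquiv (Shrink.mulEquiv : Shrink.{0} G ≃* G)

theorem exists_lr_eq_of_isUnit {C : Type*} [Monoid C] (hC : Group.IsNilpotent Cˣ) {x y : C}
    {z : ℕ → C} (hu : ∀ m, IsUnit (lr x y z m).1 ∧ IsUnit (lr x y z m).2) :
    ∃ c, (lr x y z c).1 = (lr x y z c).2 := by
  have hz : ∀ m, IsUnit (z m) := by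
    intro m
    obtain ⟨s, hs⟩ := (hu m).1
    obtain ⟨t, ht⟩ := (hu m).2
    have := (hu (m + 1)).1
    rw [lr_succ, ← hs, ← ht] at this
    exact (Units.isUnit_units_mul s _).mp ((Units.isUnit_mul_units _ t).mp this)
  have hxy : IsUnit x ∧ IsUnit y := hu 0
  obtain ⟨c, hc⟩ := exists_lr_eq_of_isNilpotent hC
  have h := lr_map (Units.val : Cˣ → C) (x := hxy.1.unit) (y := hxy.2.unit)
    (w := fun m => (hz m).unit) (w' := z) (fun m => by simp [lr_succ]) c
  simp only [IsUnit.unit_spec] at h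
  exact ⟨c, by rw [h, hc]⟩

end Nilpotent

instance {M : Type*} [Semigroup M] {g : M} (hg : IsIdempotentElem g) : Monoid hg.Corner where
  __ : Semigroup hg.Corner := inferInstanceAs (Semigroup (Subsemigroup.corner g))
  one := ⟨g, g, by simp_rw [hg.eq]⟩
  one_mul r := Subtype.ext ((Subsemigroup.mem_corner_iff hg).mp r.2).1
  mul_one r := Subtype.ext ((Subsemigroup.mem_corner_iff hg).mp r.2).2

instance {M : Type*} [Semigroup M] [Finite M] {g : M} (hg : IsIdempotentElem g) :
    Finite hg.Corner :=
  inferInstanceAs (Finite (Subsemigroup.corner g))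

section Corner

variable {M : Type*} [Monoid M] {a b g : M} {w : ℕ → M}

def cornerProj (hg : IsIdempotentElem g) (v : M) : hg.Corner := ⟨g * v * g, v, rfl⟩

theorem cornerProj_val (hg : IsIdempotentElem g) {v : M} (hv : HEquiv v g) :
    (cornerProj hg v).1 = v := by
  show g * v * g = v
  rw [hv.idem_mul hg, hv.mul_idem hg]

/-- For `p * g = a` and `q * a = g`, left translation by `q` is Green's bijection from the
`H`-class of `a` onto that of `g`, which is the group of units of the corner `g M g`. -/
theorem lr_cornerProj_mul_left (hg : IsIdempotentElem g) {p q : M} (hp : p * g = a)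
    (hq : q * a = g) (hH : ∀ m, HEquiv (lr a b w m).1 a ∧ HEquiv (lr a b w m).2 a) (m : ℕ) :
    lr (cornerProj hg (q * a)) (cornerProj hg (q * b)) (fun k => cornerProj hg (w k * p)) m =
      (cornerProj hg (q * (lr a b w m).1), cornerProj hg (q * (lr a b w m).2)) := by
  have hqv : ∀ {v}, HEquiv v a → HEquiv (q * v) g ∧ p * (q * v) = v := hEquiv_mul_left hp hq
  have hmul : ∀ {k s t}, HEquiv s a → HEquiv t a →
      (cornerProj hg (q * s) * cornerProj hg (w k * p) * cornerProj hg (q * t)).1 =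
        q * (s * w k * t) := by
    intro k s t hs ht
    show (cornerProj hg (q * s)).1 * (g * (w k * p) * g) * (cornerProj hg (q * t)).1 = _
    rw [cornerProj_val hg (hqv hs).1, cornerProj_val hg (hqv ht).1]
    calc q * s * (g * (w k * p) * g) * (q * t) = q * s * g * w k * (p * (g * (q * t))) := by
          simp only [mul_assoc]
      _ = q * (s * w k * t) := by
          rw [(hqv hs).1.mul_idem hg, (hqv ht).1.idem_mul hg, (hqv ht).2]
          simp only [mul_assoc]
  exact lr_map (fun v => cornerProj hg (q * v)) (fun k =>
    ⟨Subtype.ext ((cornerProj_val hg (hqv (hH (k + 1)).1).1).trans (hmul (hH k).1 (hH k).2).symm),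
      Subtype.ext ((cornerProj_val hg (hqv (hH (k + 1)).2).1).trans
        (hmul (hH k).2 (hH k).1).symm)⟩) m

variable [Finite M]

theorem isUnit_cornerProj (hg : IsIdempotentElem g) {v : M} (hv : HEquiv v g) :
    IsUnit (cornerProj hg v) := by
  obtain ⟨s, hs⟩ := hv.1.1
  refine IsUnit.of_mul_eq_one (cornerProj hg s) (Subtype.ext ?_)
  show (cornerProj hg v).1 * (g * s * g) = g
  rw [cornerProj_val hg hv, ← mul_assoc, ← mul_assoc, hv.mul_idem hg, hs, hg.eq]

theorem exists_lr_eq_of_forall_hEquiv (hnil : AllSubgroupsNilpotent M)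
    (hg : IsIdempotentElem g) (hga : LEquiv g a)
    (hH : ∀ m, HEquiv (lr a b w m).1 a ∧ HEquiv (lr a b w m).2 a) :
    ∃ c, (lr a b w c).1 = (lr a b w c).2 := by
  obtain ⟨⟨p, hp⟩, q, hq⟩ := hga
  have hqv : ∀ {v}, HEquiv v a → HEquiv (q * v) g ∧ p * (q * v) = v := hEquiv_mul_left hp hq
  have hC : Group.IsNilpotent hg.Cornerˣ :=
    hnil.isNilpotent ⟨fun u => (u : hg.Corner).1, fun _ _ => rfl⟩
      fun u u' h => Units.ext (Subtype.ext h)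
  obtain ⟨c, hc⟩ := exists_lr_eq_of_isUnit hC fun m => by
    rw [lr_cornerProj_mul_left hg hp hq hH]
    exact ⟨isUnit_cornerProj hg (hqv (hH m).1).1, isUnit_cornerProj hg (hqv (hH m).2).1⟩
  rw [lr_cornerProj_mul_left hg hp hq hH] at hc
  have := congrArg Subtype.val hc
  rw [cornerProj_val hg (hqv (hH c).1).1, cornerProj_val hg (hqv (hH c).2).1] at this
  exact ⟨c, by rw [← (hqv (hH c).1).2, ← (hqv (hH c).2).2, this]⟩

theorem exists_lr_eq_of_hEquiv (hnil : AllSubgroupsNilpotent M)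
    (hJ : ∀ m, JEquiv (lr a b w m).1 a ∧ JEquiv (lr a b w m).2 a) (hab : HEquiv a b) :
    ∃ c, (lr a b w c).1 = (lr a b w c).2 := by
  have h₁ : JEquiv (a * (w 0 * b)) a := by rw [← mul_assoc]; exact (hJ 1).1
  obtain ⟨g, hg, hga, -⟩ := exists_isIdempotentElem_of_jEquiv_mul h₁
    (jEquiv_of_jLe (jLe_mul_left _ _) ((jLe_mul_left _ _).trans (hJ 0).2.2) h₁.1)
  exact exists_lr_eq_of_forall_hEquiv hnil hg hga (lr_hEquiv hJ hab)

end Corner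

section Main

variable {S : Type*} [Semigroup S] [Finite S]

theorem exists_periodic_of_not_malcevNilpotent (h : ¬MalcevNilpotent S) :
    ∃ (a b : S) (w : ℕ → WithOne S) (k : ℕ), 0 < k ∧ a ≠ b ∧
      ∀ m, lr (a : WithOne S) b w (m + k) = lr (a : WithOne S) b w m := by
  have := Fintype.ofFinite (WithOne S × WithOne S)
  set N := Fintype.card (WithOne S × WithOne S)
  simp only [MalcevNilpotent, not_exists, not_and, not_forall] at h
  obtain ⟨x, y, z, hxyz⟩ := h N Fintype.card_pos
  set p := lr (x : WithOne S) y z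
  obtain ⟨i, hi, j, hj, hne, hij⟩ := Finset.exists_ne_map_eq_of_card_lt_of_maps_to
    (s := Finset.range (N + 1)) (t := Finset.univ) (f := p) (by simp [N])
    fun _ _ => Finset.mem_coe.mpr (Finset.mem_univ _)
  rw [Finset.mem_range] at hi hj
  wlog hlt : i < j generalizing i j
  · exact this j hj i hi hne.symm hij.symm (by omega)
  have hpne : ∀ m ≤ N, (p m).1 ≠ (p m).2 := fun m hm heq => hxyz (lr_eq_of_le heq hm)
  have hp1 : ∀ m, (p m).1 ≠ 1 ∧ (p m).2 ≠ 1 := by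
    intro m
    induction m with
    | zero => exact ⟨WithOne.coe_ne_one, WithOne.coe_ne_one⟩
    | succ m ih =>
      exact ⟨fun h => ih.1 (withOne_eq_one_of_mul_eq_one (withOne_eq_one_of_mul_eq_one h)),
        fun h => ih.2 (withOne_eq_one_of_mul_eq_one (withOne_eq_one_of_mul_eq_one h))⟩
  obtain ⟨a, ha⟩ := WithOne.ne_one_iff_exists.mp (hp1 i).1
  obtain ⟨b, hb⟩ := WithOne.ne_one_iff_exists.mp (hp1 i).2
  -- restart at step `i` with the segment `z i, …, z (j - 1)` repeated periodically
  refine ⟨a, b, fun t => z (i + t % (j - i)), j - i, by omega,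
    fun hab => hpne i (by omega) (by rw [← ha, ← hb, hab]), lr_add_period ?_ fun t => by simp⟩
  calc lr (a : WithOne S) b (fun t => z (i + t % (j - i))) (j - i)
      = lr (p i).1 (p i).2 (fun t => z (i + t)) (j - i) := by
        rw [ha, hb]
        exact lr_congr fun t ht => by rw [Nat.mod_eq_of_lt ht]
    _ = p j := by rw [← lr_add, Nat.add_sub_cancel' hlt.le]
    _ = ((a : WithOne S), (b : WithOne S)) := by rw [← hij]; exact Prod.ext ha.symm hb.symm

theorem PropertyP2.malcevNilpotent (hp : PropertyP2 S) (hbg : BlockGroup S)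
    (hnil : AllSubgroupsNilpotent S) : MalcevNilpotent S := by
  by_contra hM
  obtain ⟨a, b, w, k, hk, hab, hper⟩ := exists_periodic_of_not_malcevNilpotent hM
  have hJ := lr_jEquiv_of_periodic hk hper
  obtain ⟨c, hc⟩ := exists_lr_eq_of_hEquiv hnil.withOne hJ (hp.hEquiv_withOne hbg (.of_lr hJ))
  exact lr_ne_of_periodic hk hper (WithOne.coe_injective.ne hab) c hc

end Main

/-- A finite block group with all subgroups nilpotent is Mal'cev nilpotent iff it
satisfies Property `P₂`. -/
theorem stmt13 (S : Type*) [Semigroup S] [Finite S]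
    (hbg : BlockGroup S) (hnil : AllSubgroupsNilpotent S) :
    MalcevNilpotent S ↔ PropertyP2 S :=
  ⟨MalcevNilpotent.propertyP2, fun hp => hp.malcevNilpotent hbg hnil⟩

end SMN
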